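/- Let k ≥ 1 and Φ_k as above. Every maximal unlinked set in F_3^{2k} has the form a + V for some a ∈ F_3^{2k} and a k-dimensional F_3-subspace V of F_3^{2k} satisfying V = π_1(V) ⊕ π_1(V)^⊥, where π_1(V)^⊥ is the orthogonal complement of π_1(V) in F_3^k with respect to the dot product, and moreover π_2(a) ∈ π_1(V)^⊥. -/

import Mathlib

/-!
Fix `a ∈ S` and let `W = π₁(vectorSpan S)`. Unlinkedness gives `x.2 ⬝ (u.1 - v.1) = 0` for all
`x u v ∈ S`, so every `x.2` lies in `Wᗮ` and hence `S ⊆ a + (W × Wᗮ)`. Conversely, when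
`a.2 ∈ Wᗮ` the coset `a + (W × Wᗮ)` is itself unlinked, because second coordinates lie in `Wᗮ`
and differences of first coordinates lie in `W`. Maximality forces `S = a + (W × Wᗮ)`, and
`dim W + dim Wᗮ = k` since the dot product is nondegenerate.
-/

open Matrix Module

theorem Submodule.finrank_prod {K V V' : Type*} [DivisionRing K] [AddCommGroup V] [Module K V]
    [AddCommGroup V'] [Module K V'] [FiniteDimensional K V] [FiniteDimensional K V']
    (p : Submodule K V) (q : Submodule K V') :
    finrank K (p.prod q) = finrank K p + finrank K q := by
  have hinj : Function.Injective (p.subtype.prodMap q.subtype) := by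
    rw [LinearMap.coe_prodMap]
    exact Prod.map_injective.mpr ⟨p.injective_subtype, q.injective_subtype⟩
  rw [← Module.finrank_prod, ← LinearMap.finrank_range_of_inj hinj, LinearMap.range_prodMap,
    Submodule.range_subtype, Submodule.range_subtype]

theorem dotProductBilin_nondegenerate (K ι : Type*) [Field K] [Fintype ι] :
    (dotProductBilin K K : LinearMap.BilinForm K (ι → K)).Nondegenerate :=
  ⟨fun x hx => dotProduct_eq_zero x hx,
    fun y hy => dotProduct_eq_zero y fun x => (dotProduct_comm y x).trans (hy x)⟩

theorem finrank_prod_orthogonalBilin_dotProductBilin {K ι : Type*} [Field K] [Fintype ι]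
    (W : Submodule K (ι → K)) :
    finrank K (W.prod (W.orthogonalBilin (dotProductBilin K K))) = Fintype.card ι := by
  have horth : finrank K (W.orthogonalBilin (dotProductBilin K K)) =
      finrank K (ι → K) - finrank K W :=
    LinearMap.BilinForm.finrank_orthogonal (dotProductBilin_nondegenerate K ι) W
  rw [Submodule.finrank_prod, horth, Nat.add_sub_cancel' W.finrank_le,
    Module.finrank_fintype_fun_eq_card]

section Unlinked

variable {R ι : Type*} [CommRing R] [Fintype ι]

/-- Pairwise `Φ(u, v) = Φ(v, u) = 0`, where `Φ(u, v) = π₂(v) ⬝ (π₁(u) - π₁(v))`. -/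
def IsUnlinked (S : Set ((ι → R) × (ι → R))) : Prop :=
  ∀ u ∈ S, ∀ v ∈ S, v.2 ⬝ᵥ (u.1 - v.1) = 0 ∧ u.2 ⬝ᵥ (v.1 - u.1) = 0

theorem isUnlinked_singleton (a : (ι → R) × (ι → R)) : IsUnlinked {a} := by
  rintro u rfl v rfl
  simp

theorem nonempty_of_maximal_isUnlinked {S : Set ((ι → R) × (ι → R))}
    (hS : Maximal IsUnlinked S) : S.Nonempty := by
  rw [Set.nonempty_iff_ne_empty]
  rintro rfl
  exact Set.singleton_ne_empty 0 (hS.eq_of_ge (isUnlinked_singleton 0) (Set.empty_subset _))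

theorem IsUnlinked.snd_dotProduct_fst_sub {S : Set ((ι → R) × (ι → R))} (hS : IsUnlinked S)
    {x u v : (ι → R) × (ι → R)} (hx : x ∈ S) (hu : u ∈ S) (hv : v ∈ S) :
    x.2 ⬝ᵥ (u.1 - v.1) = 0 := by
  have h : u.1 - v.1 = (u.1 - x.1) - (v.1 - x.1) := by abel
  rw [h, dotProduct_sub, (hS u hu x hx).1, (hS v hv x hx).1, sub_zero]

theorem IsUnlinked.snd_mem_orthogonalBilin {S : Set ((ι → R) × (ι → R))} (hS : IsUnlinked S)
    {x : (ι → R) × (ι → R)} (hx : x ∈ S) :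
    x.2 ∈ ((vectorSpan R S).map (LinearMap.fst R _ _)).orthogonalBilin (dotProductBilin R R) := by
  suffices vectorSpan R S ≤ LinearMap.ker ((dotProductBilin R R).flip x.2 ∘ₗ LinearMap.fst R _ _) by
    rintro _ ⟨v, hv, rfl⟩
    exact this hv
  rw [vectorSpan_def, Submodule.span_le]
  rintro _ ⟨u, hu, v, hv, rfl⟩
  simpa [dotProduct_comm] using hS.snd_dotProduct_fst_sub hx hu hv

theorem IsUnlinked.subset_image_add_prod {S : Set ((ι → R) × (ι → R))} (hS : IsUnlinked S)
    {a : (ι → R) × (ι → R)} (ha : a ∈ S) :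
    let W := (vectorSpan R S).map (LinearMap.fst R _ _)
    S ⊆ (a + ·) '' (W.prod (W.orthogonalBilin (dotProductBilin R R))) := by
  intro W u hu
  refine ⟨u - a, Submodule.mem_prod.mpr ⟨?_, ?_⟩, add_sub_cancel a u⟩
  · exact Submodule.mem_map_of_mem (vsub_mem_vectorSpan R hu ha)
  · exact sub_mem (hS.snd_mem_orthogonalBilin hu) (hS.snd_mem_orthogonalBilin ha)

theorem isUnlinked_image_add_prod_orthogonalBilin (W : Submodule R (ι → R))
    {a : (ι → R) × (ι → R)} (ha : a.2 ∈ W.orthogonalBilin (dotProductBilin R R)) :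
    IsUnlinked ((a + ·) '' (W.prod (W.orthogonalBilin (dotProductBilin R R)))) := by
  have hΦ : ∀ s ∈ W.prod (W.orthogonalBilin (dotProductBilin R R)),
      ∀ t ∈ W.prod (W.orthogonalBilin (dotProductBilin R R)), (a + t).2 ⬝ᵥ (s.1 - t.1) = 0 := by
    intro s hs t ht
    have hat : (a + t).2 ∈ W.orthogonalBilin (dotProductBilin R R) := add_mem ha ht.2
    rw [dotProduct_comm]
    exact hat _ (sub_mem hs.1 ht.1)
  rintro _ ⟨s, hs, rfl⟩ _ ⟨t, ht, rfl⟩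
  simpa only [Prod.fst_add, add_sub_add_left_eq_sub] using ⟨hΦ s hs t ht, hΦ t ht s hs⟩

theorem eq_image_add_prod_of_maximal_isUnlinked {S : Set ((ι → R) × (ι → R))}
    (hS : Maximal IsUnlinked S) {a : (ι → R) × (ι → R)} (ha : a ∈ S) :
    let W := (vectorSpan R S).map (LinearMap.fst R _ _)
    S = (a + ·) '' (W.prod (W.orthogonalBilin (dotProductBilin R R))) :=
  (hS.eq_of_ge (isUnlinked_image_add_prod_orthogonalBilin _ (hS.prop.snd_mem_orthogonalBilin ha))
    (hS.prop.subset_image_add_prod ha)).symm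

end Unlinked

theorem max_unlinked_set_shape_general (k : ℕ)
    (S : Set ((Fin k → ZMod 3) × (Fin k → ZMod 3)))
    (hS : ∀ u ∈ S, ∀ v ∈ S,
      dotProduct v.2 (u.1 - v.1) = 0 ∧ dotProduct u.2 (v.1 - u.1) = 0)
    (hmax : ∀ T : Set ((Fin k → ZMod 3) × (Fin k → ZMod 3)),
      (∀ u ∈ T, ∀ v ∈ T,
        dotProduct v.2 (u.1 - v.1) = 0 ∧ dotProduct u.2 (v.1 - u.1) = 0) →
      S ⊆ T → T = S) :
    ∃ (a : (Fin k → ZMod 3) × (Fin k → ZMod 3))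
      (V : Submodule (ZMod 3) ((Fin k → ZMod 3) × (Fin k → ZMod 3))),
      S = (fun v => a + v) '' (V : Set ((Fin k → ZMod 3) × (Fin k → ZMod 3))) ∧
      Module.finrank (ZMod 3) V = k ∧
      (V : Set ((Fin k → ZMod 3) × (Fin k → ZMod 3))) =
        {x | x.1 ∈ Submodule.map (LinearMap.fst (ZMod 3) (Fin k → ZMod 3) (Fin k → ZMod 3)) V ∧
          ∀ w ∈ Submodule.map (LinearMap.fst (ZMod 3) (Fin k → ZMod 3) (Fin k → ZMod 3)) V,
            dotProduct w x.2 = 0} ∧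
      (∀ w ∈ Submodule.map (LinearMap.fst (ZMod 3) (Fin k → ZMod 3) (Fin k → ZMod 3)) V,
        dotProduct w a.2 = 0) := by
  have hSmax : Maximal IsUnlinked S := ⟨hS, fun T hT hST => (hmax T hT hST).le⟩
  obtain ⟨a, ha⟩ := nonempty_of_maximal_isUnlinked hSmax
  set W := (vectorSpan (ZMod 3) S).map (LinearMap.fst (ZMod 3) _ _)
  refine ⟨a, W.prod (W.orthogonalBilin (dotProductBilin _ _)),
    eq_image_add_prod_of_maximal_isUnlinked hSmax ha, ?_, ?_, ?_⟩
  · exact (finrank_prod_orthogonalBilin_dotProductBilin W).trans (Fintype.card_fin k)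
  · rw [Submodule.prod_map_fst]
    ext x
    exact Submodule.mem_prod
  · rw [Submodule.prod_map_fst]
    exact hSmax.prop.snd_mem_orthogonalBilin ha

/-- every maximal unlinked set in `F_3^{2k}` has the form `a + V`
with `V` a `k`-dimensional subspace satisfying `V = π₁(V) ⊕ π₁(V)^⊥` (inside
`F_3^k ⊕ F_3^k`), and `π₂(a) ∈ π₁(V)^⊥`. -/
theorem max_unlinked_set_shape (k : ℕ) (hk : 1 ≤ k)
    (S : Set ((Fin k → ZMod 3) × (Fin k → ZMod 3)))
    (hS : ∀ u ∈ S, ∀ v ∈ S,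
      dotProduct v.2 (u.1 - v.1) = 0 ∧ dotProduct u.2 (v.1 - u.1) = 0)
    (hmax : ∀ T : Set ((Fin k → ZMod 3) × (Fin k → ZMod 3)),
      (∀ u ∈ T, ∀ v ∈ T,
        dotProduct v.2 (u.1 - v.1) = 0 ∧ dotProduct u.2 (v.1 - u.1) = 0) →
      S ⊆ T → T = S) :
    ∃ (a : (Fin k → ZMod 3) × (Fin k → ZMod 3))
      (V : Submodule (ZMod 3) ((Fin k → ZMod 3) × (Fin k → ZMod 3))),
      S = (fun v => a + v) '' (V : Set ((Fin k → ZMod 3) × (Fin k → ZMod 3))) ∧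
      Module.finrank (ZMod 3) V = k ∧
      (V : Set ((Fin k → ZMod 3) × (Fin k → ZMod 3))) =
        {x | x.1 ∈ Submodule.map (LinearMap.fst (ZMod 3) (Fin k → ZMod 3) (Fin k → ZMod 3)) V ∧
          ∀ w ∈ Submodule.map (LinearMap.fst (ZMod 3) (Fin k → ZMod 3) (Fin k → ZMod 3)) V,
            dotProduct w x.2 = 0} ∧
      (∀ w ∈ Submodule.map (LinearMap.fst (ZMod 3) (Fin k → ZMod 3) (Fin k → ZMod 3)) V,
        dotProduct w a.2 = 0) :=
  max_unlinked_set_shape_general k S hS hmax
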